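/- arXiv:2111.13014 — 6 statements merged into one kernel-verified Lean document; each statement's English description precedes it below -/
import Mathlib

section
/- Let (X,d) be a metric space and let d̃ = min(d,1) be the truncated metric. Then for all Borel probability measures μ, ν on X, the Kantorovich metric d̃_K associated with d̃ and the Kantorovich–Rubinshtein metric d_KR associated with d satisfy (1/2)·d̃_K(μ,ν) ≤ d_KR(μ,ν) ≤ 2·d̃_K(μ,ν). -/
open MeasureTheory

theorem stmt0 {X : Type*} [MetricSpace X] [MeasurableSpace X] [BorelSpace X]
    (μ ν : Measure X) [IsProbabilityMeasure μ] [IsProbabilityMeasure ν] :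
    (1 / 2 : ℝ) * sSup {r : ℝ | ∃ f : X → ℝ,
        (∀ x y, |f x - f y| ≤ min (dist x y) 1) ∧
        r = ∫ x, f x ∂μ - ∫ x, f x ∂ν} ≤
      sSup {r : ℝ | ∃ f : X → ℝ,
        (∀ x y, |f x - f y| ≤ dist x y) ∧ (∀ x, |f x| ≤ 1) ∧
        r = ∫ x, f x ∂μ - ∫ x, f x ∂ν} ∧
    sSup {r : ℝ | ∃ f : X → ℝ,
        (∀ x y, |f x - f y| ≤ dist x y) ∧ (∀ x, |f x| ≤ 1) ∧
        r = ∫ x, f x ∂μ - ∫ x, f x ∂ν} ≤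
      2 * sSup {r : ℝ | ∃ f : X → ℝ,
        (∀ x y, |f x - f y| ≤ min (dist x y) 1) ∧
        r = ∫ x, f x ∂μ - ∫ x, f x ∂ν} := by
  have hXne : Nonempty X := by
    by_contra h
    rw [not_nonempty_iff] at h
    have h1 : μ Set.univ = 1 := measure_univ
    simp [Set.univ_eq_empty_iff.2 h] at h1
  obtain ⟨x₀⟩ := hXne
  set A : Set ℝ := {r : ℝ | ∃ f : X → ℝ,
      (∀ x y, |f x - f y| ≤ min (dist x y) 1) ∧
      r = ∫ x, f x ∂μ - ∫ x, f x ∂ν} with hA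
  set B : Set ℝ := {r : ℝ | ∃ f : X → ℝ,
      (∀ x y, |f x - f y| ≤ dist x y) ∧ (∀ x, |f x| ≤ 1) ∧
      r = ∫ x, f x ∂μ - ∫ x, f x ∂ν} with hB
  -- integrability of Lipschitz bounded functions
  have integ : ∀ (f : X → ℝ) (C : ℝ), (∀ x y, |f x - f y| ≤ dist x y) →
      (∀ x, |f x| ≤ C) → ∀ (κ : Measure X) [IsProbabilityMeasure κ], Integrable f κ := by
    intro f C hf hbd κ _
    have hlip : LipschitzWith 1 f := by
      refine LipschitzWith.of_dist_le_mul fun x y => ?_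
      rw [Real.dist_eq]
      simpa using hf x y
    exact Integrable.mono' (integrable_const C)
      hlip.continuous.measurable.aestronglyMeasurable
      (Filter.Eventually.of_forall fun x => by simpa using hbd x)
  -- A ⊆ B via shifting
  have hAB : A ⊆ B := by
    rintro r ⟨f, hf, hr⟩
    refine ⟨fun x => f x - f x₀, ?_, ?_, ?_⟩
    · intro x y
      simpa using (hf x y).trans (min_le_left _ _)
    · intro x
      simpa using (hf x x₀).trans (min_le_right _ _)
    · have hfl : ∀ x y, |f x - f y| ≤ dist x y := fun x y => (hf x y).trans (min_le_left _ _)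
      have hfb : ∀ x, |f x| ≤ |f x₀| + 1 := by
        intro x
        calc |f x| = |f x - f x₀ + f x₀| := by ring_nf
        _ ≤ |f x - f x₀| + |f x₀| := abs_add_le _ _
        _ ≤ 1 + |f x₀| := by
            have := (hf x x₀).trans (min_le_right _ _); linarith
        _ = |f x₀| + 1 := by ring
      have h1 : ∫ x, (f x - f x₀) ∂μ = (∫ x, f x ∂μ) - f x₀ := by
        rw [integral_sub (integ f _ hfl hfb μ) (integrable_const _)]
        simp
      have h2 : ∫ x, (f x - f x₀) ∂ν = (∫ x, f x ∂ν) - f x₀ := by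
        rw [integral_sub (integ f _ hfl hfb ν) (integrable_const _)]
        simp
      rw [h1, h2, hr]; ring
  have hBbdd : BddAbove B := by
    refine ⟨2, ?_⟩
    rintro r ⟨f, hf, hbd, hr⟩
    have h1 : ∀ (κ : Measure X) [IsProbabilityMeasure κ], |∫ x, f x ∂κ| ≤ 1 := by
      intro κ _
      have := norm_integral_le_of_norm_le_const (μ := κ) (C := 1)
        (Filter.Eventually.of_forall fun x => by simpa using hbd x) (f := f)
      simpa using this
    have := h1 μ; have := h1 ν
    rw [hr]
    have hμ := abs_le.1 (h1 μ)
    have hν := abs_le.1 (h1 ν)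
    linarith [hμ.1, hμ.2, hν.1, hν.2]
  have hAbdd : BddAbove A := hBbdd.mono hAB
  have h0A : (0 : ℝ) ∈ A := ⟨fun _ => 0, fun x y => by simp [le_min (dist_nonneg) zero_le_one], by simp⟩
  have h0B : (0 : ℝ) ∈ B := ⟨fun _ => 0, fun x y => by simp [dist_nonneg], fun x => by simp, by simp⟩
  have hAne : A.Nonempty := ⟨0, h0A⟩
  have hBne : B.Nonempty := ⟨0, h0B⟩
  have hAnn : 0 ≤ sSup A := le_csSup hAbdd h0A
  constructor
  · have : sSup A ≤ sSup B := csSup_le_csSup hBbdd hAne hAB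
    nlinarith
  · refine csSup_le hBne ?_
    rintro r ⟨f, hf, hbd, hr⟩
    have hmem : r / 2 ∈ A := by
      refine ⟨fun x => f x / 2, ?_, ?_⟩
      · intro x y
        have h1 : |f x / 2 - f y / 2| = |f x - f y| / 2 := by
          have he : f x / 2 - f y / 2 = (f x - f y) / 2 := by ring
          rw [he, abs_div]; norm_num
        rw [h1]
        refine le_min ?_ ?_
        · have := hf x y; linarith [dist_nonneg (x := x) (y := y)]
        · have := abs_sub_abs_le_abs_sub (f x) (f y)
          have h2 : |f x - f y| ≤ 2 := by
            calc |f x - f y| ≤ |f x| + |f y| := abs_sub _ _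
            _ ≤ 1 + 1 := add_le_add (hbd x) (hbd y)
            _ = 2 := by norm_num
          linarith
      · rw [hr]
        rw [integral_div, integral_div]
        ring
    have := le_csSup hAbdd hmem
    linarith
end

section
/- Let X and Y be Polish metric spaces with the product metric d((x₁,y₁),(x₂,y₂)) = d_X(x₁,x₂) + d_Y(y₁,y₂) on X×Y. Then for all Borel probability measures μ₁, μ₂ on X and ν₁, ν₂ on Y with finite first moments, the Hausdorff distance (with respect to the Kantorovich metric d_K on probability measures on X×Y) between the coupling sets satisfies H_K(Π(μ₁,ν₁), Π(μ₂,ν₂)) ≤ d_K(μ₁,μ₂) + d_K(ν₁,ν₂). -/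
/-!
Given a coupling σ₁ of (μ₁, ν₁) and couplings π of (μ₁, μ₂), ρ of (ν₁, ν₂), disintegrate
π and ρ into kernels κ and η, and move a point (x, y) drawn from σ₁ to a point (x', y')
drawn from κ x ⊗ η y. The law σ₂ of (x', y') couples μ₂ with ν₂, and the joint law of the
two points couples σ₁ with σ₂. Under it (x, x') has law π and (y, y') has law ρ, so the sum
metric has expected value cost(π) + cost(ρ). Taking infima over π and ρ bounds one half of
the Hausdorff distance; the other half follows by symmetry.
-/

open MeasureTheory
open scoped ENNReal

def IsCoupling {A B : Type*} [MeasurableSpace A] [MeasurableSpace B]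
    (σ : Measure (A × B)) (μ : Measure A) (ν : Measure B) : Prop :=
  σ.map Prod.fst = μ ∧ σ.map Prod.snd = ν

noncomputable def Kcost {A B : Type*} [MeasurableSpace A] [MeasurableSpace B]
    (h : A → B → ℝ) (μ : Measure A) (ν : Measure B) : ℝ≥0∞ :=
  ⨅ σ ∈ {σ : Measure (A × B) | IsCoupling σ μ ν},
    ∫⁻ p, ENNReal.ofReal (h p.1 p.2) ∂σ

open ProbabilityTheory Function

section Kcost

variable {A B : Type*} [MeasurableSpace A] [MeasurableSpace B]

lemma IsCoupling.isFiniteMeasure {σ : Measure (A × B)} {μ : Measure A} {ν : Measure B}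
    [IsFiniteMeasure μ] (h : IsCoupling σ μ ν) : IsFiniteMeasure σ :=
  ⟨by rw [← Measure.fst_univ, Measure.fst, h.1]; exact measure_lt_top μ _⟩

lemma IsCoupling.map_swap {σ : Measure (A × B)} {μ : Measure A} {ν : Measure B}
    (h : IsCoupling σ μ ν) : IsCoupling (σ.map Prod.swap) ν μ :=
  ⟨(Measure.fst_map_swap (ρ := σ)).trans h.2, (Measure.snd_map_swap (ρ := σ)).trans h.1⟩

lemma Kcost_le_lintegral (c : A → B → ℝ) {μ : Measure A} {ν : Measure B}
    {σ : Measure (A × B)} (hσ : IsCoupling σ μ ν) :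
    Kcost c μ ν ≤ ∫⁻ p, ENNReal.ofReal (c p.1 p.2) ∂σ :=
  iInf₂_le σ hσ

lemma Kcost_le_Kcost_swap (c : A → B → ℝ) (μ : Measure A) (ν : Measure B) :
    Kcost c μ ν ≤ Kcost (fun b a => c a b) ν μ :=
  le_iInf₂ fun _ hσ => (Kcost_le_lintegral c hσ.map_swap).trans_eq
    (lintegral_map_equiv _ MeasurableEquiv.prodComm)

lemma Kcost_comm {c : A → A → ℝ} (hc : ∀ a b, c a b = c b a) (μ ν : Measure A) :
    Kcost c μ ν = Kcost c ν μ := by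
  have hflip : (fun b a => c a b) = c := funext₂ fun b a => hc a b
  exact le_antisymm ((Kcost_le_Kcost_swap c μ ν).trans_eq (by rw [hflip]))
    ((Kcost_le_Kcost_swap c ν μ).trans_eq (by rw [hflip]))

end Kcost

section Gluing

variable {X Y X' Y' : Type*} [MeasurableSpace X] [MeasurableSpace Y]
  [MeasurableSpace X'] [MeasurableSpace Y']

lemma map_fst_compProd_parallelComp (σ : Measure (X × Y)) [SFinite σ]
    (κ : Kernel X X') [IsSFiniteKernel κ] (η : Kernel Y Y') [IsMarkovKernel η] :
    (σ ⊗ₘ (κ ∥ₖ η)).map (fun q => (q.1.1, q.2.1)) = σ.map Prod.fst ⊗ₘ κ := by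
  ext s hs
  have hproj : Measurable fun q : (X × Y) × X' × Y' => (q.1.1, q.2.1) := by fun_prop
  rw [Measure.map_apply hproj hs, Measure.compProd_apply (hproj hs), Measure.compProd_apply hs,
    lintegral_map (κ.measurable_kernel_prodMk_left hs) measurable_fst]
  congr with p
  have hslice : Prod.mk p ⁻¹' ((fun q : (X × Y) × X' × Y' => (q.1.1, q.2.1)) ⁻¹' s)
      = (Prod.mk p.1 ⁻¹' s) ×ˢ Set.univ := by
    ext; simp
  rw [hslice, Kernel.parallelComp_apply, Measure.prod_prod, measure_univ, mul_one]

lemma map_snd_compProd_parallelComp (σ : Measure (X × Y)) [SFinite σ]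
    (κ : Kernel X X') [IsMarkovKernel κ] (η : Kernel Y Y') [IsSFiniteKernel η] :
    (σ ⊗ₘ (κ ∥ₖ η)).map (fun q => (q.1.2, q.2.2)) = σ.map Prod.snd ⊗ₘ η := by
  ext s hs
  have hproj : Measurable fun q : (X × Y) × X' × Y' => (q.1.2, q.2.2) := by fun_prop
  rw [Measure.map_apply hproj hs, Measure.compProd_apply (hproj hs), Measure.compProd_apply hs,
    lintegral_map (η.measurable_kernel_prodMk_left hs) measurable_snd]
  congr with p
  have hslice : Prod.mk p ⁻¹' ((fun q : (X × Y) × X' × Y' => (q.1.2, q.2.2)) ⁻¹' s)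
      = Set.univ ×ˢ (Prod.mk p.2 ⁻¹' s) := by
    ext; simp
  rw [hslice, Kernel.parallelComp_apply, Measure.prod_prod, measure_univ, one_mul]

theorem exists_gluing [StandardBorelSpace X'] [Nonempty X'] [StandardBorelSpace Y'] [Nonempty Y']
    (σ : Measure (X × Y)) [SFinite σ] (π : Measure (X × X')) [IsFiniteMeasure π]
    (ρ : Measure (Y × Y')) [IsFiniteMeasure ρ]
    (hπ : π.map Prod.fst = σ.map Prod.fst) (hρ : ρ.map Prod.fst = σ.map Prod.snd) :
    ∃ τ : Measure ((X × Y) × (X' × Y')), τ.map Prod.fst = σ ∧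
      τ.map (fun q => (q.1.1, q.2.1)) = π ∧ τ.map (fun q => (q.1.2, q.2.2)) = ρ := by
  refine ⟨σ ⊗ₘ (π.condKernel ∥ₖ ρ.condKernel), Measure.fst_compProd _ _, ?_, ?_⟩
  · rw [map_fst_compProd_parallelComp, ← hπ]
    exact π.disintegrate _
  · rw [map_snd_compProd_parallelComp, ← hρ]
    exact ρ.disintegrate _

end Gluing

theorem iSup_iInf_Kcost_add_le {X Y X' Y' : Type*} [MeasurableSpace X] [MeasurableSpace Y]
    [MeasurableSpace X'] [MeasurableSpace Y']
    [StandardBorelSpace X'] [Nonempty X'] [StandardBorelSpace Y'] [Nonempty Y']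
    {cX : X → X' → ℝ} {cY : Y → Y' → ℝ} (hcX : Measurable (uncurry cX))
    (hcY : Measurable (uncurry cY)) {μ₁ : Measure X} {ν₁ : Measure Y} {μ₂ : Measure X'}
    {ν₂ : Measure Y'} [IsFiniteMeasure μ₁] [IsFiniteMeasure ν₁] :
    ⨆ σ₁ ∈ {σ : Measure (X × Y) | IsCoupling σ μ₁ ν₁},
        ⨅ σ₂ ∈ {σ : Measure (X' × Y') | IsCoupling σ μ₂ ν₂},
          Kcost (fun p q => cX p.1 q.1 + cY p.2 q.2) σ₁ σ₂
      ≤ Kcost cX μ₁ μ₂ + Kcost cY ν₁ ν₂ := by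
  refine iSup₂_le fun σ₁ hσ₁ => ENNReal.le_iInf₂_add_iInf₂ fun π hπ ρ hρ => ?_
  have := IsCoupling.isFiniteMeasure hσ₁
  have := IsCoupling.isFiniteMeasure hπ
  have := IsCoupling.isFiniteMeasure hρ
  obtain ⟨τ, hτ, hτX, hτY⟩ :=
    exists_gluing σ₁ π ρ (hπ.1.trans hσ₁.1.symm) (hρ.1.trans hσ₁.2.symm)
  have hprojX : Measurable fun q : (X × Y) × X' × Y' => (q.1.1, q.2.1) := by fun_prop
  have hprojY : Measurable fun q : (X × Y) × X' × Y' => (q.1.2, q.2.2) := by fun_prop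
  have hσ₂ : IsCoupling (τ.map Prod.snd) μ₂ ν₂ := by
    constructor
    · rw [← hπ.2, ← hτX, Measure.map_map measurable_fst measurable_snd,
        Measure.map_map measurable_snd hprojX]
      rfl
    · rw [← hρ.2, ← hτY, Measure.map_map measurable_snd measurable_snd,
        Measure.map_map measurable_snd hprojY]
      rfl
  have hmX : Measurable fun q : (X × Y) × X' × Y' => ENNReal.ofReal (cX q.1.1 q.2.1) :=
    (hcX.comp hprojX).ennreal_ofReal
  calc ⨅ σ₂ ∈ {σ : Measure (X' × Y') | IsCoupling σ μ₂ ν₂},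
          Kcost (fun p q => cX p.1 q.1 + cY p.2 q.2) σ₁ σ₂
      ≤ ∫⁻ q, ENNReal.ofReal (cX q.1.1 q.2.1 + cY q.1.2 q.2.2) ∂τ :=
        (iInf₂_le (τ.map Prod.snd) hσ₂).trans (Kcost_le_lintegral _ ⟨hτ, rfl⟩)
    _ ≤ ∫⁻ q, ENNReal.ofReal (cX q.1.1 q.2.1) + ENNReal.ofReal (cY q.1.2 q.2.2) ∂τ :=
        lintegral_mono fun _ => ENNReal.ofReal_add_le
    _ = (∫⁻ z, ENNReal.ofReal (cX z.1 z.2) ∂π) + ∫⁻ z, ENNReal.ofReal (cY z.1 z.2) ∂ρ := by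
        rw [lintegral_add_left hmX, ← hτX, ← hτY]
        congr 1
        exacts [(lintegral_map hcX.ennreal_ofReal hprojX).symm,
          (lintegral_map hcY.ennreal_ofReal hprojY).symm]

theorem stmt5_general {X Y : Type*}
    [MetricSpace X] [PolishSpace X] [MeasurableSpace X] [BorelSpace X]
    [MetricSpace Y] [PolishSpace Y] [MeasurableSpace Y] [BorelSpace Y]
    (μ₁ μ₂ : Measure X) (ν₁ ν₂ : Measure Y)
    [IsProbabilityMeasure μ₁] [IsProbabilityMeasure μ₂]
    [IsProbabilityMeasure ν₁] [IsProbabilityMeasure ν₂] :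
    -- the Kantorovich distance on X × Y associated with the sum metric
    -- d((x₁,y₁),(x₂,y₂)) = d_X(x₁,x₂) + d_Y(y₁,y₂)
    max
      (⨆ σ₁ ∈ {σ : Measure (X × Y) | IsCoupling σ μ₁ ν₁},
        ⨅ σ₂ ∈ {σ : Measure (X × Y) | IsCoupling σ μ₂ ν₂},
          Kcost (fun p q : X × Y => dist p.1 q.1 + dist p.2 q.2) σ₁ σ₂)
      (⨆ σ₂ ∈ {σ : Measure (X × Y) | IsCoupling σ μ₂ ν₂},
        ⨅ σ₁ ∈ {σ : Measure (X × Y) | IsCoupling σ μ₁ ν₁},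
          Kcost (fun p q : X × Y => dist p.1 q.1 + dist p.2 q.2) σ₁ σ₂)
      ≤ Kcost (fun x x' : X => dist x x') μ₁ μ₂ + Kcost (fun y y' : Y => dist y y') ν₁ ν₂ := by
  have := nonempty_of_isProbabilityMeasure μ₁
  have := nonempty_of_isProbabilityMeasure ν₁
  have hdX : Measurable (uncurry (dist : X → X → ℝ)) := continuous_dist.measurable
  have hdY : Measurable (uncurry (dist : Y → Y → ℝ)) := continuous_dist.measurable
  have hsym := Kcost_comm (c := fun p q : X × Y => dist p.1 q.1 + dist p.2 q.2)
    fun p q => by rw [dist_comm p.1, dist_comm p.2]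
  refine max_le (iSup_iInf_Kcost_add_le hdX hdY) ?_
  refine (iSup₂_mono fun σ₂ _ => iInf₂_mono fun σ₁ _ => (hsym σ₁ σ₂).le).trans ?_
  rw [Kcost_comm dist_comm μ₁, Kcost_comm dist_comm ν₁]
  exact iSup_iInf_Kcost_add_le hdX hdY

theorem stmt5 {X Y : Type*}
    [MetricSpace X] [PolishSpace X] [MeasurableSpace X] [BorelSpace X]
    [MetricSpace Y] [PolishSpace Y] [MeasurableSpace Y] [BorelSpace Y]
    (μ₁ μ₂ : Measure X) (ν₁ ν₂ : Measure Y)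
    [IsProbabilityMeasure μ₁] [IsProbabilityMeasure μ₂]
    [IsProbabilityMeasure ν₁] [IsProbabilityMeasure ν₂]
    (x₀ : X) (y₀ : Y)
    (hμ₁ : Integrable (fun x => dist x x₀) μ₁) (hμ₂ : Integrable (fun x => dist x x₀) μ₂)
    (hν₁ : Integrable (fun y => dist y y₀) ν₁) (hν₂ : Integrable (fun y => dist y y₀) ν₂) :
    -- the Kantorovich distance on X × Y associated with the sum metric
    -- d((x₁,y₁),(x₂,y₂)) = d_X(x₁,x₂) + d_Y(y₁,y₂)
    max
      (⨆ σ₁ ∈ {σ : Measure (X × Y) | IsCoupling σ μ₁ ν₁},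
        ⨅ σ₂ ∈ {σ : Measure (X × Y) | IsCoupling σ μ₂ ν₂},
          Kcost (fun p q : X × Y => dist p.1 q.1 + dist p.2 q.2) σ₁ σ₂)
      (⨆ σ₂ ∈ {σ : Measure (X × Y) | IsCoupling σ μ₂ ν₂},
        ⨅ σ₁ ∈ {σ : Measure (X × Y) | IsCoupling σ μ₁ ν₁},
          Kcost (fun p q : X × Y => dist p.1 q.1 + dist p.2 q.2) σ₁ σ₂)
      ≤ Kcost (fun x x' : X => dist x x') μ₁ μ₂ + Kcost (fun y y' : Y => dist y y') ν₁ ν₂ :=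
  stmt5_general μ₁ μ₂ ν₁ ν₂
end

section
/- Continuity (in weak convergence) of the map sending marginals to the coupling set: Let X, Y be Polish metric spaces and suppose μₙ → μ weakly on X and νₙ → ν weakly on Y. Then the coupling sets Π(μₙ,νₙ) converge to Π(μ,ν) in the Hausdorff metric induced by the Kantorovich–Rubinshtein metric on probability measures on X×Y. -/
open MeasureTheory Filter
open scoped ENNReal Topology

/-- The Kantorovich–Rubinshtein distance on probability measures on `X × Y`,
with respect to the sum metric on the product. -/
noncomputable def dKR {X Y : Type*} [MetricSpace X] [MetricSpace Y]
    [MeasurableSpace X] [MeasurableSpace Y]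
    (σ τ : Measure (X × Y)) : ℝ :=
  sSup {r : ℝ | ∃ f : X × Y → ℝ,
    (∀ p q : X × Y, |f p - f q| ≤ dist p.1 q.1 + dist p.2 q.2) ∧
    (∀ p, |f p| ≤ 1) ∧ r = ∫ p, f p ∂σ - ∫ p, f p ∂τ}

open ProbabilityTheory Set

/-!
Let `W(μ, μ')` be the optimal transport cost for the truncated metric `min (dist x y) 2`.
Given couplings `α` of `μ, μ'` and `β` of `ν, ν'`, glue a coupling `τ` of `μ, ν` to `α` along `X`
and to `β` along `Y`: the far end of the glued measure is a coupling `σ` of `μ', ν'`, and since a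
test function `f` of `dKR` satisfies `|f p - f q| ≤ min (d p₁ q₁) 2 + min (d p₂ q₂) 2`, we get
`dKR σ τ ≤ cost α + cost β`. Hence both halves of the Hausdorff distance are bounded by
`W(μ, μₙ) + W(ν, νₙ)`. Finally `W(μ, μₙ) → 0` under weak convergence: partition the space into
pieces of diameter `< δ` with `μ`-null frontiers, so that by the portmanteau theorem `μₙ`
eventually gives each piece nearly its `μ`-mass, and couple the common mass inside each piece.
-/

section Coupling

variable {A B : Type*} [MeasurableSpace A] [MeasurableSpace B]
  {σ : Measure (A × B)} {μ : Measure A} {ν : Measure B}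

lemma IsCoupling.measure_univ (h : IsCoupling σ μ ν) : σ univ = μ univ := by
  rw [← h.1, Measure.map_apply measurable_fst MeasurableSet.univ, preimage_univ]

lemma IsCoupling.isProbabilityMeasure [IsProbabilityMeasure μ] (h : IsCoupling σ μ ν) :
    IsProbabilityMeasure σ :=
  ⟨by rw [h.measure_univ, MeasureTheory.measure_univ]⟩

lemma IsCoupling.swap (h : IsCoupling σ μ ν) : IsCoupling (σ.map Prod.swap) ν μ := by
  constructor
  · rw [Measure.map_map measurable_fst measurable_swap]; exact h.2
  · rw [Measure.map_map measurable_snd measurable_swap]; exact h.1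

lemma IsCoupling.add {σ' : Measure (A × B)} {μ' : Measure A} {ν' : Measure B}
    (h : IsCoupling σ μ ν) (h' : IsCoupling σ' μ' ν') : IsCoupling (σ + σ') (μ + μ') (ν + ν') :=
  ⟨by rw [Measure.map_add _ _ measurable_fst, h.1, h'.1],
    by rw [Measure.map_add _ _ measurable_snd, h.2, h'.2]⟩

lemma IsCoupling.sum {ι : Type*} {σ : ι → Measure (A × B)} {μ : ι → Measure A}
    {ν : ι → Measure B} (h : ∀ i, IsCoupling (σ i) (μ i) (ν i)) :
    IsCoupling (Measure.sum σ) (Measure.sum μ) (Measure.sum ν) :=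
  ⟨by rw [Measure.map_sum measurable_fst.aemeasurable]; exact congrArg _ (funext fun i => (h i).1),
    by rw [Measure.map_sum measurable_snd.aemeasurable]; exact congrArg _ (funext fun i => (h i).2)⟩

lemma isCoupling_inv_smul_prod [IsFiniteMeasure μ] [IsFiniteMeasure ν] (h : μ univ = ν univ) :
    IsCoupling ((μ univ)⁻¹ • μ.prod ν) μ ν := by
  by_cases h0 : μ univ = 0
  · rw [Measure.measure_univ_eq_zero.mp h0, Measure.measure_univ_eq_zero.mp (h.symm.trans h0)]
    simp [IsCoupling]
  · have hinv : (μ univ)⁻¹ * μ univ = 1 := ENNReal.inv_mul_cancel h0 (measure_ne_top _ _)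
    constructor
    · rw [Measure.map_smul, Measure.map_fst_prod, smul_smul, ← h, hinv, one_smul]
    · rw [Measure.map_smul, Measure.map_snd_prod, smul_smul, hinv, one_smul]

end Coupling

section Gluing

lemma MeasureTheory.Measure.map_prodMap_compProd_comap {A A' C : Type*} [MeasurableSpace A]
    [MeasurableSpace A'] [MeasurableSpace C] (τ : Measure A) [SFinite τ] (κ : Kernel A' C)
    [IsSFiniteKernel κ] {f : A → A'} (hf : Measurable f) :
    (τ ⊗ₘ κ.comap f hf).map (Prod.map f id) = τ.map f ⊗ₘ κ := by
  ext s hs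
  rw [Measure.map_apply (hf.prodMap measurable_id) hs,
    Measure.compProd_apply ((hf.prodMap measurable_id) hs), Measure.compProd_apply hs,
    lintegral_map (Kernel.measurable_kernel_prodMk_left hs) hf]
  rfl

variable {X Y X' Y' : Type*} [MeasurableSpace X] [MeasurableSpace Y] [MeasurableSpace X']
  [MeasurableSpace Y'] [StandardBorelSpace X'] [Nonempty X'] [StandardBorelSpace Y'] [Nonempty Y']

theorem exists_measure_glue (τ : Measure (X × Y)) [IsFiniteMeasure τ] (α : Measure (X × X'))
    (β : Measure (Y × Y')) [IsFiniteMeasure α] [IsFiniteMeasure β]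
    (hα : α.fst = τ.fst) (hβ : β.fst = τ.snd) :
    ∃ γ : Measure ((X × Y) × (X' × Y')), γ.fst = τ ∧
      γ.map (Prod.map Prod.fst Prod.fst) = α ∧ γ.map (Prod.map Prod.snd Prod.snd) = β := by
  let K : Kernel (X × Y) (X' × Y') :=
    α.condKernel.comap Prod.fst measurable_fst ×ₖ β.condKernel.comap Prod.snd measurable_snd
  refine ⟨τ ⊗ₘ K, Measure.fst_compProd τ K, ?_, ?_⟩
  · rw [show Prod.map Prod.fst Prod.fst = Prod.map Prod.fst id ∘ Prod.map id Prod.fst from rfl,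
      ← Measure.map_map (measurable_fst.prodMap measurable_id)
        (measurable_id.prodMap measurable_fst),
      ← Measure.compProd_map measurable_fst, ← Kernel.fst_eq, Kernel.fst_prod,
      Measure.map_prodMap_compProd_comap, ← Measure.fst, ← hα, Measure.disintegrate]
  · rw [show Prod.map Prod.snd Prod.snd = Prod.map Prod.snd id ∘ Prod.map id Prod.snd from rfl,
      ← Measure.map_map (measurable_snd.prodMap measurable_id)
        (measurable_id.prodMap measurable_snd),
      ← Measure.compProd_map measurable_snd, ← Kernel.snd_eq, Kernel.snd_prod,
      Measure.map_prodMap_compProd_comap, ← Measure.snd, ← hβ, Measure.disintegrate]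

end Gluing

section TruncatedCost

variable {Z : Type*} [PseudoMetricSpace Z]

lemma continuous_min_dist_two : Continuous fun p : Z × Z => min (dist p.1 p.2) 2 :=
  continuous_dist.min continuous_const

lemma abs_min_dist_two_le (x y : Z) : |min (dist x y) 2| ≤ 2 := by
  rw [abs_of_nonneg (le_min dist_nonneg zero_le_two)]
  exact min_le_right _ _

variable [MeasurableSpace Z]

/-- Truncating the metric at `2` keeps the cost finite while still dominating the oscillation of the
test functions of `dKR`. -/
noncomputable def truncCost (α : Measure (Z × Z)) : ℝ := ∫ p, min (dist p.1 p.2) 2 ∂α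

lemma truncCost_map_swap (α : Measure (Z × Z)) : truncCost (α.map Prod.swap) = truncCost α := by
  rw [truncCost, show (Prod.swap : Z × Z → Z × Z) = MeasurableEquiv.prodComm from rfl,
    integral_map_equiv]
  simp only [truncCost, MeasurableEquiv.prodComm, MeasurableEquiv.coe_mk, Equiv.prodComm_apply,
    Prod.fst_swap, Prod.snd_swap, dist_comm]

variable [SecondCountableTopology Z] [OpensMeasurableSpace Z]

lemma truncCost_le (α : Measure (Z × Z)) [IsProbabilityMeasure α] {δ : ℝ} (hδ : 0 ≤ δ) :
    truncCost α ≤ δ + 2 * α.real {p | δ < dist p.1 p.2} := by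
  set S := {p : Z × Z | δ < dist p.1 p.2}
  have hS : MeasurableSet S := (isOpen_lt continuous_const continuous_dist).measurableSet
  have hint : Integrable (fun p => S.indicator (fun _ => (2 : ℝ)) p) α :=
    (integrable_const 2).indicator hS
  have hle : ∀ p, min (dist p.1 p.2) 2 ≤ δ + S.indicator (fun _ => 2) p := by
    intro p
    by_cases hp : p ∈ S
    · rw [indicator_of_mem hp]; linarith [min_le_right (dist p.1 p.2) 2]
    · rw [indicator_of_notMem hp]
      linarith [min_le_left (dist p.1 p.2) 2, (not_lt.mp hp : dist p.1 p.2 ≤ δ)]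
  calc truncCost α ≤ ∫ p, (δ + S.indicator (fun _ => 2) p) ∂α := by
        refine integral_mono ?_ ((integrable_const δ).add hint) hle
        refine Integrable.of_bound continuous_min_dist_two.aestronglyMeasurable 2
          (ae_of_all _ fun p => abs_min_dist_two_le p.1 p.2)
    _ = δ + 2 * α.real S := by
        rw [integral_add (integrable_const δ) hint, integral_const, integral_indicator_const _ hS]
        simp [mul_comm]

end TruncatedCost

section TransportCost

variable {Z : Type*} [PseudoMetricSpace Z] [MeasurableSpace Z]

noncomputable def truncTransportCost (μ μ' : Measure Z) : ℝ≥0∞ :=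
  ⨅ α : {α : Measure (Z × Z) // IsCoupling α μ μ'}, ENNReal.ofReal (truncCost α.1)

lemma IsCoupling.truncTransportCost_le {α : Measure (Z × Z)} {μ μ' : Measure Z}
    (hα : IsCoupling α μ μ') : truncTransportCost μ μ' ≤ ENNReal.ofReal (truncCost α) :=
  iInf_le (fun α : {α // IsCoupling α μ μ'} => ENNReal.ofReal (truncCost α.1)) ⟨α, hα⟩

lemma truncTransportCost_comm (μ μ' : Measure Z) :
    truncTransportCost μ μ' = truncTransportCost μ' μ := by
  have key : ∀ μ μ' : Measure Z, truncTransportCost μ' μ ≤ truncTransportCost μ μ' :=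
    fun μ μ' => le_iInf fun α =>
      α.2.swap.truncTransportCost_le.trans_eq (by rw [truncCost_map_swap])
  exact le_antisymm (key _ _) (key _ _)

end TransportCost

section KantorovichRubinshtein

variable {X Y : Type*}

section TestFunction

variable [PseudoMetricSpace X] [PseudoMetricSpace Y] {f : X × Y → ℝ}
  (hf : ∀ p q : X × Y, |f p - f q| ≤ dist p.1 q.1 + dist p.2 q.2)
include hf

lemma continuous_of_abs_sub_le_dist_add_dist : Continuous f := by
  refine (LipschitzWith.of_dist_le_mul (K := 2) fun p q => ?_).continuous
  rw [Real.dist_eq, Prod.dist_eq, NNReal.coe_ofNat]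
  linarith [hf p q, le_max_left (dist p.1 q.1) (dist p.2 q.2),
    le_max_right (dist p.1 q.1) (dist p.2 q.2)]

lemma abs_sub_le_min_dist_two_add (hf₁ : ∀ p, |f p| ≤ 1) (p q : X × Y) :
    |f p - f q| ≤ min (dist p.1 q.1) 2 + min (dist p.2 q.2) 2 := by
  have hosc : |f p - f q| ≤ 2 := (abs_sub _ _).trans (by linarith [hf₁ p, hf₁ q])
  rcases le_total (dist p.1 q.1) 2 with h₁ | h₁ <;>
    rcases le_total (dist p.2 q.2) 2 with h₂ | h₂ <;>
    simp only [min_eq_left, min_eq_right, h₁, h₂] <;>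
    linarith [hf p q, dist_nonneg (x := p.1) (y := q.1), dist_nonneg (x := p.2) (y := q.2)]

end TestFunction

variable [PseudoMetricSpace X] [SecondCountableTopology X] [MeasurableSpace X] [BorelSpace X]
  [PseudoMetricSpace Y] [SecondCountableTopology Y] [MeasurableSpace Y] [BorelSpace Y]

lemma abs_integral_snd_sub_integral_fst_le (γ : Measure ((X × Y) × (X × Y))) [IsFiniteMeasure γ]
    {f : X × Y → ℝ} (hf : ∀ p q : X × Y, |f p - f q| ≤ dist p.1 q.1 + dist p.2 q.2)
    (hf₁ : ∀ p, |f p| ≤ 1) :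
    |∫ p, f p ∂γ.snd - ∫ p, f p ∂γ.fst| ≤
      truncCost (γ.map (Prod.map Prod.fst Prod.fst)) +
        truncCost (γ.map (Prod.map Prod.snd Prod.snd)) := by
  have hfc := continuous_of_abs_sub_le_dist_add_dist hf
  have hint : ∀ {g : (X × Y) × (X × Y) → ℝ} (C : ℝ), Continuous g → (∀ x, |g x| ≤ C) →
      Integrable g γ := fun C hg hC =>
    Integrable.of_bound hg.aestronglyMeasurable C (ae_of_all _ hC)
  have hX : Integrable (fun pq : (X × Y) × (X × Y) => min (dist pq.1.1 pq.2.1) 2) γ :=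
    hint 2 (continuous_min_dist_two.comp (continuous_fst.prodMap continuous_fst))
      fun pq => abs_min_dist_two_le pq.1.1 pq.2.1
  have hY : Integrable (fun pq : (X × Y) × (X × Y) => min (dist pq.1.2 pq.2.2) 2) γ :=
    hint 2 (continuous_min_dist_two.comp (continuous_snd.prodMap continuous_snd))
      fun pq => abs_min_dist_two_le pq.1.2 pq.2.2
  have h₂ : Integrable (fun pq : (X × Y) × (X × Y) => f pq.2) γ :=
    hint 1 (hfc.comp continuous_snd) fun pq => hf₁ pq.2
  have h₁ : Integrable (fun pq : (X × Y) × (X × Y) => f pq.1) γ :=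
    hint 1 (hfc.comp continuous_fst) fun pq => hf₁ pq.1
  rw [Measure.snd, Measure.fst, truncCost, truncCost,
    integral_map measurable_snd.aemeasurable hfc.aestronglyMeasurable,
    integral_map measurable_fst.aemeasurable hfc.aestronglyMeasurable,
    integral_map (measurable_fst.prodMap measurable_fst).aemeasurable
      continuous_min_dist_two.aestronglyMeasurable,
    integral_map (measurable_snd.prodMap measurable_snd).aemeasurable
      continuous_min_dist_two.aestronglyMeasurable]
  simp only [Prod.map_fst, Prod.map_snd]
  rw [← integral_sub h₂ h₁, ← integral_add hX hY]
  refine (abs_integral_le_integral_abs).trans (integral_mono (h₂.sub h₁).abs (hX.add hY) ?_)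
  intro pq
  simpa only [dist_comm] using abs_sub_le_min_dist_two_add hf hf₁ pq.2 pq.1

end KantorovichRubinshtein

section Hausdorff

variable {X Y : Type*} [MetricSpace X] [MeasurableSpace X] [MetricSpace Y] [MeasurableSpace Y]

lemma dKR_le {σ τ : Measure (X × Y)} {c : ℝ}
    (h : ∀ f : X × Y → ℝ, (∀ p q : X × Y, |f p - f q| ≤ dist p.1 q.1 + dist p.2 q.2) →
      (∀ p, |f p| ≤ 1) → |∫ p, f p ∂σ - ∫ p, f p ∂τ| ≤ c) :
    dKR σ τ ≤ c := by
  have hc : 0 ≤ c := by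
    simpa using h 0 (fun p q => by simp only [Pi.zero_apply, sub_zero, abs_zero]; positivity)
      (by simp)
  refine Real.sSup_le ?_ hc
  rintro r ⟨f, hf, hf₁, rfl⟩
  exact (le_abs_self _).trans (h f hf hf₁)

lemma dKR_comm (σ τ : Measure (X × Y)) : dKR σ τ = dKR τ σ := by
  unfold dKR
  congr 1
  ext r
  constructor <;> rintro ⟨f, hf, hf₁, rfl⟩ <;>
    exact ⟨-f, fun p q => by simpa only [Pi.neg_apply, neg_sub_neg, abs_sub_comm] using hf p q,
      fun p => by simpa using hf₁ p, by simp only [Pi.neg_apply, integral_neg]; ring⟩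

variable [SecondCountableTopology X] [BorelSpace X] [StandardBorelSpace X]
  [SecondCountableTopology Y] [BorelSpace Y] [StandardBorelSpace Y]

theorem exists_isCoupling_dKR_le {μ μ' : Measure X} {ν ν' : Measure Y} [IsProbabilityMeasure μ]
    [IsProbabilityMeasure ν] {α : Measure (X × X)} {β : Measure (Y × Y)} {τ : Measure (X × Y)}
    (hα : IsCoupling α μ μ') (hβ : IsCoupling β ν ν') (hτ : IsCoupling τ μ ν) :
    ∃ σ, IsCoupling σ μ' ν' ∧ dKR σ τ ≤ truncCost α + truncCost β := by
  have := nonempty_of_isProbabilityMeasure μ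
  have := nonempty_of_isProbabilityMeasure ν
  have := hα.isProbabilityMeasure
  have := hβ.isProbabilityMeasure
  have := hτ.isProbabilityMeasure
  obtain ⟨γ, hγτ, hγα, hγβ⟩ :=
    exists_measure_glue τ α β (hα.1.trans hτ.1.symm) (hβ.1.trans hτ.2.symm)
  have : IsProbabilityMeasure γ := ⟨by rw [← Measure.fst_univ, hγτ, measure_univ]⟩
  refine ⟨γ.snd, ⟨?_, ?_⟩, dKR_le fun f hf hf₁ => ?_⟩
  · rw [Measure.snd, Measure.map_map measurable_fst measurable_snd, ← hα.2, ← hγα,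
      Measure.map_map measurable_snd (measurable_fst.prodMap measurable_fst)]
    rfl
  · rw [Measure.snd, Measure.map_map measurable_snd measurable_snd, ← hβ.2, ← hγβ,
      Measure.map_map measurable_snd (measurable_snd.prodMap measurable_snd)]
    rfl
  · simpa only [hγτ, hγα, hγβ] using abs_integral_snd_sub_integral_fst_le γ hf hf₁

lemma iSup_iInf_dKR_le (μ μ' : Measure X) (ν ν' : Measure Y) [IsProbabilityMeasure μ]
    [IsProbabilityMeasure ν] :
    ⨆ τ : {τ : Measure (X × Y) // IsCoupling τ μ ν},
        ⨅ σ : {σ : Measure (X × Y) // IsCoupling σ μ' ν'}, ENNReal.ofReal (dKR σ.1 τ.1) ≤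
      truncTransportCost μ μ' + truncTransportCost ν ν' := by
  refine iSup_le fun τ => ENNReal.le_iInf_add_iInf fun α β => ?_
  obtain ⟨σ, hσ, hdist⟩ := exists_isCoupling_dKR_le α.2 β.2 τ.2
  exact (iInf_le _ ⟨σ, hσ⟩).trans ((ENNReal.ofReal_le_ofReal hdist).trans ENNReal.ofReal_add_le)

end Hausdorff

section Partition

lemma frontier_disjointed_subset {Z ι : Type*} [TopologicalSpace Z] [Preorder ι]
    [LocallyFiniteOrderBot ι] (B : ι → Set Z) (i : ι) :
    frontier (disjointed B i) ⊆ ⋃ k, frontier (B k) := by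
  refine disjointedRec (f := B) (p := fun t => frontier t ⊆ ⋃ k, frontier (B k))
    (fun t k ht => ?_) (subset_iUnion (fun k => frontier (B k)) i)
  rw [sdiff_eq]
  refine (frontier_inter_subset _ _).trans (union_subset ?_ ?_)
  · exact inter_subset_left.trans ht
  · rw [frontier_compl]
    exact inter_subset_right.trans (subset_iUnion (fun k => frontier (B k)) k)

theorem exists_partition_dist_lt_measure_frontier_eq_zero {Z : Type*} [PseudoMetricSpace Z]
    [TopologicalSpace.SeparableSpace Z] [Nonempty Z] [MeasurableSpace Z] [OpensMeasurableSpace Z]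
    (μ : Measure Z) [SFinite μ] {δ : ℝ} (hδ : 0 < δ) :
    ∃ E : ℕ → Set Z, (∀ i, MeasurableSet (E i)) ∧ Pairwise (Function.onFun Disjoint E) ∧
      ⋃ i, E i = univ ∧ (∀ i, ∀ x ∈ E i, ∀ y ∈ E i, dist x y < δ) ∧
      ∀ i, μ (frontier (E i)) = 0 := by
  obtain ⟨c, hc⟩ := TopologicalSpace.exists_dense_seq Z
  choose r hr hnull using fun k =>
    exists_null_frontier_thickening μ {c k} (show δ / 4 < δ / 2 by linarith)
  simp only [Metric.thickening_singleton] at hnull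
  refine ⟨disjointed fun k => Metric.ball (c k) (r k),
    MeasurableSet.disjointed fun k => measurableSet_ball, disjoint_disjointed _, ?_, ?_, ?_⟩
  · rw [iUnion_disjointed]
    refine eq_univ_of_forall fun z => ?_
    obtain ⟨k, hk⟩ := Metric.denseRange_iff.1 hc z (δ / 4) (by linarith)
    exact mem_iUnion.2 ⟨k, hk.trans (hr k).1⟩
  · intro i x hx y hy
    have hx' := Metric.mem_ball.1 (disjointed_subset _ i hx)
    have hy' := Metric.mem_ball.1 (disjointed_subset _ i hy)
    linarith [dist_triangle_right x y (c i), (hr i).2]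
  · exact fun i => measure_mono_null (frontier_disjointed_subset _ i) (measure_iUnion_null hnull)

end Partition

section CouplingAlongPartition

variable {Z : Type*} [MeasurableSpace Z]

lemma MeasureTheory.Measure.exists_le_measure_univ_eq (μ : Measure Z) [IsFiniteMeasure μ]
    {m : ℝ≥0∞} (hm : m ≤ μ univ) : ∃ ν ≤ μ, ν univ = m := by
  refine ⟨(m / μ univ) • μ, fun s => ?_, ?_⟩
  · rw [Measure.smul_apply, smul_eq_mul]
    exact mul_le_of_le_one_left zero_le (ENNReal.div_le_of_le_mul (by rwa [one_mul]))
  · rw [Measure.smul_apply, smul_eq_mul]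
    exact ENNReal.div_mul_cancel' (fun h => le_antisymm (h ▸ hm) zero_le)
      (fun h => absurd h (measure_ne_top μ univ))

lemma MeasureTheory.Measure.prod_compl_prod_eq_zero {W : Type*} [MeasurableSpace W]
    {μ : Measure Z} {ν : Measure W} [SFinite ν] {s : Set Z} {t : Set W}
    (hs : μ sᶜ = 0) (ht : ν tᶜ = 0) : μ.prod ν (s ×ˢ t)ᶜ = 0 := by
  rw [compl_prod_eq_union]
  exact measure_union_null (by simp [Measure.prod_prod, hs]) (by simp [Measure.prod_prod, ht])

lemma MeasureTheory.Measure.sum_le_of_le_restrict {ι : Type*} [Countable ι] {μ : Measure Z}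
    {c : ι → Measure Z} {E : ι → Set Z} (hE : ∀ i, MeasurableSet (E i))
    (hdisj : Pairwise (Function.onFun Disjoint E)) (hc : ∀ i, c i ≤ μ.restrict (E i)) :
    Measure.sum c ≤ μ :=
  calc Measure.sum c ≤ Measure.sum fun i => μ.restrict (E i) := Measure.le_iff.2 fun s hs => by
        simp only [Measure.sum_apply _ hs]
        exact ENNReal.tsum_le_tsum fun i => hc i s
    _ = μ.restrict (⋃ i, E i) := (Measure.restrict_iUnion hdisj hE).symm
    _ ≤ μ := Measure.restrict_le_self

lemma MeasureTheory.Measure.measure_compl_eq_zero_of_le_restrict {μ ν : Measure Z} {s : Set Z}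
    (hs : MeasurableSet s) (h : ν ≤ μ.restrict s) : ν sᶜ = 0 :=
  nonpos_iff_eq_zero.1 <| (h _).trans_eq <| by
    rw [Measure.restrict_apply hs.compl, compl_inter_self, measure_empty]

/-- On each piece `E i`, couple mass `min (ρ (E i)) (ρ' (E i))` inside `E i × E i`; couple the
remaining mass by a product measure. -/
theorem exists_isCoupling_measure_compl_le (ρ ρ' : Measure Z) [IsProbabilityMeasure ρ]
    [IsProbabilityMeasure ρ'] {E : ℕ → Set Z} (hE : ∀ i, MeasurableSet (E i))
    (hdisj : Pairwise (Function.onFun Disjoint E)) :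
    ∃ α, IsCoupling α ρ ρ' ∧ α (⋃ i, E i ×ˢ E i)ᶜ ≤ 1 - ∑' i, min (ρ (E i)) (ρ' (E i)) := by
  set m := fun i => min (ρ (E i)) (ρ' (E i))
  have hsplit : ∀ (μ : Measure Z) [IsProbabilityMeasure μ] (c : ℕ → Measure Z),
      (∀ i, c i ≤ μ.restrict (E i)) → (∀ i, c i univ = m i) →
      Measure.sum c + (μ - Measure.sum c) = μ ∧ (μ - Measure.sum c) univ = 1 - ∑' i, m i := by
    intro μ _ c hc hcm
    have hle := Measure.sum_le_of_le_restrict hE hdisj hc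
    have := isFiniteMeasure_of_le _ hle
    refine ⟨by rw [add_comm]; exact Measure.sub_add_cancel_of_le hle, ?_⟩
    rw [Measure.sub_apply MeasurableSet.univ hle, measure_univ,
      Measure.sum_apply _ MeasurableSet.univ, tsum_congr hcm]
  choose a ha hma using fun i => (ρ.restrict (E i)).exists_le_measure_univ_eq
    (m := m i) (by rw [Measure.restrict_apply_univ]; exact min_le_left _ _)
  choose b hb hmb using fun i => (ρ'.restrict (E i)).exists_le_measure_univ_eq
    (m := m i) (by rw [Measure.restrict_apply_univ]; exact min_le_right _ _)
  have := fun i => isFiniteMeasure_of_le _ (ha i)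
  have := fun i => isFiniteMeasure_of_le _ (hb i)
  obtain ⟨hρ, hrest⟩ := hsplit ρ a ha hma
  obtain ⟨hρ', hrest'⟩ := hsplit ρ' b hb hmb
  have hrem := isCoupling_inv_smul_prod (hrest.trans hrest'.symm)
  have hcpl := (IsCoupling.sum fun i =>
    isCoupling_inv_smul_prod ((hma i).trans (hmb i).symm)).add hrem
  rw [hρ, hρ'] at hcpl
  refine ⟨_, hcpl, ?_⟩
  have hdiag : ∀ i, ((a i univ)⁻¹ • (a i).prod (b i)) (⋃ i, E i ×ˢ E i)ᶜ = 0 := fun i => by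
    refine measure_mono_null (compl_subset_compl.2 (subset_iUnion (fun i => E i ×ˢ E i) i)) ?_
    rw [Measure.smul_apply, smul_eq_mul, Measure.prod_compl_prod_eq_zero
      (Measure.measure_compl_eq_zero_of_le_restrict (hE i) (ha i))
      (Measure.measure_compl_eq_zero_of_le_restrict (hE i) (hb i)), mul_zero]
  rw [Measure.add_apply, Measure.sum_apply _
    (MeasurableSet.iUnion fun i => (hE i).prod (hE i)).compl, ENNReal.tsum_eq_zero.2 hdiag,
    zero_add]
  exact (measure_mono (subset_univ _)).trans (hrem.measure_univ.trans hrest).le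

end CouplingAlongPartition

lemma ENNReal.tendsto_tsum_min {ι α : Type*} {l : Filter α} {f : ι → ℝ≥0∞} {g : α → ι → ℝ≥0∞}
    (hg : ∀ i, Tendsto (fun a => g a i) l (𝓝 (f i))) :
    Tendsto (fun a => ∑' i, min (f i) (g a i)) l (𝓝 (∑' i, f i)) := by
  refine tendsto_order.2 ⟨fun b hb => ?_, fun b hb => Eventually.of_forall fun a =>
    (ENNReal.tsum_le_tsum fun i => min_le_left _ _).trans_lt hb⟩
  rw [ENNReal.tsum_eq_iSup_sum] at hb
  obtain ⟨s, hs⟩ := lt_iSup_iff.1 hb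
  have hsum : Tendsto (fun a => ∑ i ∈ s, min (f i) (g a i)) l (𝓝 (∑ i ∈ s, f i)) := by
    simpa only [min_self] using
      tendsto_finsetSum s fun i _ => (tendsto_const_nhds (x := f i)).min (hg i)
  exact (hsum.eventually (lt_mem_nhds hs)).mono fun a ha => ha.trans_le (ENNReal.sum_le_tsum s)

theorem tendsto_truncTransportCost {Z ι : Type*} [PseudoMetricSpace Z] [SecondCountableTopology Z]
    [MeasurableSpace Z] [BorelSpace Z] {l : Filter ι} {μs : ι → ProbabilityMeasure Z}
    {μ : ProbabilityMeasure Z} (h : Tendsto μs l (𝓝 μ)) :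
    Tendsto (fun n => truncTransportCost (μ : Measure Z) (μs n)) l (𝓝 0) := by
  have := nonempty_of_isProbabilityMeasure (μ : Measure Z)
  refine ENNReal.tendsto_nhds_zero.2 fun ε hε => ?_
  obtain ⟨δ, hδ, hδpos, hδε⟩ := ENNReal.lt_iff_exists_real_btwn.1 hε
  obtain ⟨E, hE, hdisj, hcover, hsmall, hnull⟩ :=
    exists_partition_dist_lt_measure_frontier_eq_zero (μ : Measure Z) (ENNReal.ofReal_pos.1 hδpos)
  set s := fun n => ∑' i, min ((μ : Measure Z) (E i)) ((μs n : Measure Z) (E i))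
  have hs : Tendsto s l (𝓝 1) := by
    have := ENNReal.tendsto_tsum_min fun i =>
      ProbabilityMeasure.tendsto_measure_of_null_frontier_of_tendsto' h (hnull i)
    rwa [← measure_iUnion hdisj hE, hcover, measure_univ] at this
  have hbound : Tendsto (fun n => ENNReal.ofReal δ + 2 * (1 - s n)) l (𝓝 (ENNReal.ofReal δ)) := by
    simpa using tendsto_const_nhds.add (ENNReal.Tendsto.const_mul
      (ENNReal.Tendsto.sub tendsto_const_nhds hs (Or.inl ENNReal.one_ne_top))
      (Or.inr ENNReal.ofNat_ne_top))
  filter_upwards [hbound.eventually (gt_mem_nhds hδε)] with n hn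
  obtain ⟨α, hα, hαD⟩ := exists_isCoupling_measure_compl_le (μ : Measure Z) (μs n) hE hdisj
  have := hα.isProbabilityMeasure
  have hfar : {p : Z × Z | δ < dist p.1 p.2} ⊆ (⋃ i, E i ×ˢ E i)ᶜ := by
    rintro p hp hmem
    obtain ⟨i, hp₁, hp₂⟩ := mem_iUnion.1 hmem
    exact (hsmall i _ hp₁ _ hp₂).not_gt hp
  calc truncTransportCost (μ : Measure Z) (μs n)
      ≤ ENNReal.ofReal (truncCost α) := hα.truncTransportCost_le
    _ ≤ ENNReal.ofReal (δ + 2 * α.real {p | δ < dist p.1 p.2}) :=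
        ENNReal.ofReal_le_ofReal (truncCost_le α hδ)
    _ = ENNReal.ofReal δ + 2 * α {p | δ < dist p.1 p.2} := by
        rw [ENNReal.ofReal_add hδ (by positivity), ENNReal.ofReal_mul zero_le_two,
          measureReal_def, ENNReal.ofReal_toReal (measure_ne_top _ _), ENNReal.ofReal_ofNat]
    _ ≤ ENNReal.ofReal δ + 2 * (1 - s n) := by gcongr; exact (measure_mono hfar).trans hαD
    _ ≤ ε := hn.le

theorem stmt15 {X Y : Type*}
    [MetricSpace X] [PolishSpace X] [MeasurableSpace X] [BorelSpace X]
    [MetricSpace Y] [PolishSpace Y] [MeasurableSpace Y] [BorelSpace Y]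
    (μn : ℕ → ProbabilityMeasure X) (μ : ProbabilityMeasure X)
    (νn : ℕ → ProbabilityMeasure Y) (ν : ProbabilityMeasure Y)
    (hμ : Tendsto μn atTop (𝓝 μ)) (hν : Tendsto νn atTop (𝓝 ν)) :
    Tendsto (fun n =>
      max
        (⨆ σ : {σ : Measure (X × Y) // IsCoupling σ (μn n : Measure X) (νn n : Measure Y)},
          ⨅ τ : {τ : Measure (X × Y) // IsCoupling τ (μ : Measure X) (ν : Measure Y)},
            ENNReal.ofReal (dKR (σ : Measure (X × Y)) (τ : Measure (X × Y))))
        (⨆ τ : {τ : Measure (X × Y) // IsCoupling τ (μ : Measure X) (ν : Measure Y)},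
          ⨅ σ : {σ : Measure (X × Y) // IsCoupling σ (μn n : Measure X) (νn n : Measure Y)},
            ENNReal.ofReal (dKR (σ : Measure (X × Y)) (τ : Measure (X × Y)))))
      atTop (𝓝 0) := by
  have hcost := (tendsto_truncTransportCost hμ).add (tendsto_truncTransportCost hν)
  rw [add_zero] at hcost
  refine tendsto_of_tendsto_of_tendsto_of_le_of_le tendsto_const_nhds hcost (fun _ => zero_le)
    fun n => max_le ?_ (iSup_iInf_dKR_le _ _ _ _)
  -- the first half is the second one with the two coupling sets exchanged
  have := iSup_iInf_dKR_le (μn n : Measure X) μ (νn n : Measure Y) ν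
  simpa only [dKR_comm, truncTransportCost_comm] using this
end

section
/- Convergence in measure of Monge maps from weak convergence of plans: Let X be a Polish space, μₙ, ν_n Borel probability measures on X for n ≥ 0 with μₙ → μ₀ in total variation. Let Tₙ: X → X be Borel maps such that the measures σₙ, defined as the pushforwards of μₙ under x ↦ (x, Tₙ(x)), converge weakly to σ₀. Then Tₙ → T₀ in measure with respect to μ₀, i.e., for every δ > 0, μ₀(x : d(Tₙ(x), T₀(x)) ≥ δ) → 0. -/
/-!
By Lusin's theorem `T₀` is continuous on a closed set `K` of almost full `μ₀`-measure, so
`A = {(x, y) | x ∈ K, δ ≤ d(y, T₀ x)}` is closed and `σ₀`-null. The portmanteau theorem gives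
`σₙ(A) = μₙ({δ ≤ d(Tₙ, T₀)} ∩ K) → 0`, total variation convergence transfers this to `μ₀`, and
the rest of the bad set lies in `Kᶜ`.
-/

open MeasureTheory Filter Set
open scoped ENNReal Topology

section Lusin

variable {α β : Type*} [TopologicalSpace α] [MeasurableSpace α] [OpensMeasurableSpace α]
  {μ : Measure α} [IsFiniteMeasure μ] [μ.WeaklyRegular]

theorem MeasurableSet.exists_isClosed_measure_compl_lt_inter_eq {A : Set α}
    (hA : MeasurableSet A) {ε : ℝ≥0∞} (hε : ε ≠ 0) :
    ∃ K, IsClosed K ∧ μ Kᶜ < ε ∧ ∃ V, IsOpen V ∧ A ∩ K = V ∩ K := by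
  have hε2 : ε / 2 ≠ 0 := ENNReal.div_ne_zero.2 ⟨hε, ENNReal.ofNat_ne_top⟩
  obtain ⟨F, hFA, hF, hμF⟩ := hA.exists_isClosed_sdiff_lt (measure_ne_top μ A) hε2
  obtain ⟨G, hGA, hG, hμG⟩ := hA.compl.exists_isClosed_sdiff_lt (measure_ne_top μ Aᶜ) hε2
  -- `A` is relatively open in `F ∪ G`, as `F ⊆ A` and `G ⊆ Aᶜ`.
  refine ⟨F ∪ G, hF.union hG, ?_, Gᶜ, hG.isOpen_compl, ?_⟩
  · calc μ (F ∪ G)ᶜ ≤ μ ((A \ F) ∪ (Aᶜ \ G)) := measure_mono fun x hx => by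
          by_cases hxA : x ∈ A
          exacts [Or.inl ⟨hxA, fun h => hx (Or.inl h)⟩, Or.inr ⟨hxA, fun h => hx (Or.inr h)⟩]
      _ ≤ μ (A \ F) + μ (Aᶜ \ G) := measure_union_le _ _
      _ < ε / 2 + ε / 2 := ENNReal.add_lt_add hμF hμG
      _ = ε := ENNReal.add_halves ε
  · ext x
    constructor
    · rintro ⟨hxA, hxK⟩
      exact ⟨fun hxG => hGA hxG hxA, hxK⟩
    · rintro ⟨hxG, hxF | hxG'⟩
      exacts [⟨hFA hxF, Or.inl hxF⟩, absurd hxG' hxG]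

theorem Measurable.exists_isClosed_measure_compl_lt_continuousOn [TopologicalSpace β]
    [SecondCountableTopology β] [MeasurableSpace β] [OpensMeasurableSpace β] {f : α → β}
    (hf : Measurable f) {ε : ℝ≥0∞} (hε : ε ≠ 0) :
    ∃ K, IsClosed K ∧ μ Kᶜ < ε ∧ ContinuousOn f K := by
  obtain ⟨B, hBc, -, hB⟩ := TopologicalSpace.exists_countable_basis β
  have := hBc.to_subtype
  obtain ⟨η, hη, hηε⟩ := ENNReal.exists_pos_sum_of_countable hε B
  choose K hK hμK V hV hKV using fun U : B =>
    (hf (hB.isOpen U.2).measurableSet).exists_isClosed_measure_compl_lt_inter_eq (μ := μ)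
      (ENNReal.coe_ne_zero.2 (hη U).ne')
  refine ⟨⋂ U, K U, isClosed_iInter hK, ?_, ?_⟩
  · calc μ (⋂ U, K U)ᶜ = μ (⋃ U, (K U)ᶜ) := by rw [compl_iInter]
      _ ≤ ∑' U, μ (K U)ᶜ := measure_iUnion_le _
      _ ≤ ∑' U, (η U : ℝ≥0∞) := ENNReal.tsum_le_tsum fun U => (hμK U).le
      _ < ε := hηε
  · rw [continuousOn_iff_continuous_domRestrict, hB.continuous_iff]
    intro U hU
    refine isOpen_induced_iff.2 ⟨V ⟨U, hU⟩, hV _, ?_⟩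
    ext ⟨x, hx⟩
    have hxK : x ∈ K ⟨U, hU⟩ := mem_iInter.1 hx _
    have := congrArg (x ∈ ·) (hKV ⟨U, hU⟩)
    simp only [mem_inter_iff, mem_preimage, hxK, and_true, eq_iff_iff] at this
    simpa [domRestrict_apply] using this.symm

end Lusin

theorem isClosed_setOf_fst_mem_le_dist_snd {X Y : Type*} [TopologicalSpace X]
    [PseudoMetricSpace Y] {K : Set X} (hK : IsClosed K) {g : X → Y} (hg : ContinuousOn g K)
    (δ : ℝ) : IsClosed {p : X × Y | p.1 ∈ K ∧ δ ≤ dist p.2 (g p.1)} := by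
  have hcont : ContinuousOn (fun p : X × Y => dist p.2 (g p.1)) (K ×ˢ univ) :=
    continuous_dist.comp_continuousOn
      (continuous_snd.continuousOn.prodMk (hg.comp continuous_fst.continuousOn fun p hp => hp.1))
  convert hcont.preimage_isClosed_of_isClosed (hK.prod isClosed_univ) (isClosed_Ici (a := δ))
    using 1
  ext p
  simp

theorem MeasureTheory.Measure.map_prodMk_setOf_fst_mem_le_dist_snd {X Y : Type*} [MeasurableSpace X]
    [PseudoMetricSpace Y] [MeasurableSpace Y] [BorelSpace Y] [SecondCountableTopology Y]
    (μ : Measure X) {f g : X → Y} (hf : Measurable f) (hg : Measurable g) {K : Set X}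
    (hK : MeasurableSet K) (δ : ℝ) :
    μ.map (fun x => (x, f x)) {p | p.1 ∈ K ∧ δ ≤ dist p.2 (g p.1)} =
      μ ({x | δ ≤ dist (f x) (g x)} ∩ K) := by
  rw [Measure.map_apply (measurable_id'.prodMk hf)]
  · congr 1
    ext x
    simp [and_comm]
  · exact (measurable_fst hK).inter
      (measurableSet_le measurable_const (measurable_snd.dist (hg.comp measurable_fst)))

theorem MeasureTheory.ProbabilityMeasure.tendsto_measure_of_isClosed_of_measure_eq_zero
    {Ω ι : Type*} {L : Filter ι} [MeasurableSpace Ω] [TopologicalSpace Ω] [OpensMeasurableSpace Ω]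
    [HasOuterApproxClosed Ω] {P : ProbabilityMeasure Ω} {Ps : ι → ProbabilityMeasure Ω}
    (hPs : Tendsto Ps L (𝓝 P)) {F : Set Ω} (hF : IsClosed F) (hPF : (P : Measure Ω) F = 0) :
    Tendsto (fun i => (Ps i : Measure Ω) F) L (𝓝 0) :=
  tendsto_of_le_liminf_of_limsup_le bot_le
    (hPF ▸ ProbabilityMeasure.limsup_measure_closed_le_of_tendsto hPs hF)

theorem tendsto_measure_of_tendsto_iSup_abs_sub {X ι : Type*} [MeasurableSpace X]
    {L : Filter ι} {μ : ι → Measure X} [∀ i, IsFiniteMeasure (μ i)] {ν : Measure X}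
    [IsFiniteMeasure ν]
    (hTV : Tendsto (fun i => ⨆ s : {s : Set X // MeasurableSet s},
      |(μ i s.1).toReal - (ν s.1).toReal|) L (𝓝 0))
    {s : ι → Set X} (hs : ∀ i, MeasurableSet (s i))
    (hμs : Tendsto (fun i => μ i (s i)) L (𝓝 0)) :
    Tendsto (fun i => ν (s i)) L (𝓝 0) := by
  have hbdd : ∀ i, BddAbove (range fun s : {s : Set X // MeasurableSet s} =>
      |(μ i s.1).toReal - (ν s.1).toReal|) := fun i => by
    refine ⟨(μ i univ).toReal + (ν univ).toReal, ?_⟩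
    rintro _ ⟨t, rfl⟩
    refine (abs_sub _ _).trans ?_
    simp only [abs_of_nonneg ENNReal.toReal_nonneg]
    exact add_le_add (ENNReal.toReal_mono (measure_ne_top _ _) (measure_mono (subset_univ _)))
      (ENNReal.toReal_mono (measure_ne_top _ _) (measure_mono (subset_univ _)))
  have hdiff : Tendsto (fun i => (ν (s i)).toReal - (μ i (s i)).toReal) L (𝓝 0) := by
    refine squeeze_zero_norm (fun i => ?_) hTV
    rw [Real.norm_eq_abs, abs_sub_comm]
    exact le_ciSup (f := fun s : {s : Set X // MeasurableSet s} =>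
      |(μ i s.1).toReal - (ν s.1).toReal|) (hbdd i) ⟨s i, hs i⟩
  have hμs' : Tendsto (fun i => (μ i (s i)).toReal) L (𝓝 0) := by
    simpa only [ENNReal.toReal_zero, Function.comp_def] using
      (ENNReal.tendsto_toReal ENNReal.zero_ne_top).comp hμs
  rw [← ENNReal.tendsto_toReal_iff (fun i => measure_ne_top _ _) ENNReal.zero_ne_top,
    ENNReal.toReal_zero]
  simpa using hdiff.add hμs'

theorem stmt16 {X : Type*}
    [MetricSpace X] [PolishSpace X] [MeasurableSpace X] [BorelSpace X]
    (μ : ℕ → Measure X) [∀ n, IsProbabilityMeasure (μ n)]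
    -- total variation convergence μₙ → μ₀
    (hTV : Tendsto (fun n => ⨆ s : {s : Set X // MeasurableSet s},
        |((μ n) s.1).toReal - ((μ 0) s.1).toReal|) atTop (𝓝 0))
    (T : ℕ → X → X) (hT : ∀ n, Measurable (T n))
    -- weak convergence of the plans σₙ = (id, Tₙ)_*μₙ to σ₀ = (id, T₀)_*μ₀
    (hweak : ∀ f : BoundedContinuousFunction (X × X) ℝ,
      Tendsto (fun n => ∫ p, f p ∂((μ n).map (fun x => (x, T n x))))
        atTop (𝓝 (∫ p, f p ∂((μ 0).map (fun x => (x, T 0 x)))))) :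
    ∀ δ : ℝ, 0 < δ →
      Tendsto (fun n => (μ 0) {x | δ ≤ dist (T n x) (T 0 x)}) atTop (𝓝 0) := by
  intro δ hδ
  let σ : ℕ → ProbabilityMeasure (X × X) := fun n =>
    ⟨(μ n).map (fun x => (x, T n x)),
      Measure.isProbabilityMeasure_map (measurable_id'.prodMk (hT n)).aemeasurable⟩
  have hσ : Tendsto σ atTop (𝓝 (σ 0)) :=
    ProbabilityMeasure.tendsto_iff_forall_integral_tendsto.2 hweak
  refine ENNReal.tendsto_nhds_zero.2 fun ε hε => ?_
  obtain ⟨K, hK, hKε, hT₀K⟩ :=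
    (hT 0).exists_isClosed_measure_compl_lt_continuousOn (μ := μ 0) (ENNReal.half_pos hε.ne').ne'
  have hσK : ∀ n, (σ n : Measure (X × X)) {p | p.1 ∈ K ∧ δ ≤ dist p.2 (T 0 p.1)} =
      μ n ({x | δ ≤ dist (T n x) (T 0 x)} ∩ K) := fun n =>
    Measure.map_prodMk_setOf_fst_mem_le_dist_snd _ (hT n) (hT 0) hK.measurableSet δ
  have hμnK : Tendsto (fun n => μ n ({x | δ ≤ dist (T n x) (T 0 x)} ∩ K)) atTop (𝓝 0) := by
    simp_rw [← hσK]
    refine ProbabilityMeasure.tendsto_measure_of_isClosed_of_measure_eq_zero hσ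
      (isClosed_setOf_fst_mem_le_dist_snd hK hT₀K δ) ?_
    simp [hσK 0, hδ.not_ge]
  have hμ₀K := tendsto_measure_of_tendsto_iSup_abs_sub hTV
    (fun n => (measurableSet_le measurable_const ((hT n).dist (hT 0))).inter hK.measurableSet)
    hμnK
  filter_upwards [hμ₀K.eventually_le_const (ENNReal.half_pos hε.ne')] with n hn
  calc μ 0 {x | δ ≤ dist (T n x) (T 0 x)}
      ≤ μ 0 ({x | δ ≤ dist (T n x) (T 0 x)} ∩ K) + μ 0 Kᶜ :=
        (measure_le_inter_add_sdiff _ _ K).trans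
          (add_le_add_right (measure_mono (sdiff_subset_compl _ _)) _)
    _ ≤ ε / 2 + ε / 2 := add_le_add hn hKε.le
    _ = ε := ENNReal.add_halves ε
end

section
/- If Borel maps Tₙ: X → X converge to T₀ in measure with respect to μ₀ and μₙ → μ₀ in total variation, then the pushforward measures σₙ of μₙ under x ↦ (x, Tₙ(x)) converge weakly to the pushforward σ₀ of μ₀ under x ↦ (x, T₀(x)). -/
open MeasureTheory Filter Set
open scoped ENNReal Topology

/-!
Split `∫ f(x, Tₙ x) dμₙ - ∫ f(x, T₀ x) dμ₀` at `∫ f(x, Tₙ x) dμ₀`. The first difference is at most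
`2‖f‖` times the total-variation distance of `μₙ` and `μ₀`, uniformly in the integrand: by the
layer-cake formula the integrals of `f + ‖f‖ ≥ 0` are integrals over `t ∈ (0, 2‖f‖]` of the measures
of its superlevel sets, and each of these changes by at most that distance. For the second,
`x ↦ (x, Tₙ x)` tends to `x ↦ (x, T₀ x)` in `μ₀`-measure, and convergence in measure implies
weak convergence of the image measures.
-/

section TotalVariation

variable {α : Type*} [MeasurableSpace α]

noncomputable def tvDist (ν μ : Measure α) : ℝ :=
  ⨆ s : {s : Set α // MeasurableSet s}, |ν.real s.1 - μ.real s.1|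

lemma abs_measureReal_sub_le_tvDist (ν μ : Measure α) [IsFiniteMeasure ν] [IsFiniteMeasure μ]
    {s : Set α} (hs : MeasurableSet s) : |ν.real s - μ.real s| ≤ tvDist ν μ := by
  refine le_ciSup (f := fun s : {s : Set α // MeasurableSet s} => |ν.real s.1 - μ.real s.1|)
    ⟨ν.real univ + μ.real univ, ?_⟩ ⟨s, hs⟩
  rintro _ ⟨t, rfl⟩
  exact (abs_sub _ _).trans <| by
    simpa only [abs_of_nonneg measureReal_nonneg] using
      add_le_add (measureReal_mono (subset_univ t.1)) (measureReal_mono (subset_univ t.1))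

lemma abs_integral_sub_integral_le_mul_tvDist (ν μ : Measure α) [IsFiniteMeasure ν]
    [IsFiniteMeasure μ] {h : α → ℝ} (hm : Measurable h) {M : ℝ} (hM : 0 ≤ M)
    (h_nonneg : ∀ x, 0 ≤ h x) (h_le : ∀ x, h x ≤ M) :
    |∫ x, h x ∂ν - ∫ x, h x ∂μ| ≤ M * tvDist ν μ := by
  have h_int : ∀ (m : Measure α) [IsFiniteMeasure m], Integrable h m := fun m _ =>
    (integrable_const M).mono' hm.aestronglyMeasurable
      (.of_forall fun x => by rw [Real.norm_of_nonneg (h_nonneg x)]; exact h_le x)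
  have layer_cake : ∀ (m : Measure α) [IsFiniteMeasure m],
      ∫ x, h x ∂m = ∫ t in Ioc 0 M, m.real {x | t ≤ h x} := fun m _ =>
    (h_int m).integral_eq_integral_Ioc_meas_le (.of_forall h_nonneg) (.of_forall h_le)
  have tail_int : ∀ (m : Measure α) [IsFiniteMeasure m],
      IntegrableOn (fun t => m.real {x | t ≤ h x}) (Ioc 0 M) := fun m _ =>
    have tail_anti : Antitone fun t => m.real {x | t ≤ h x} := fun _ _ hst =>
      measureReal_mono fun _ hx => hst.trans hx
    ((tail_anti.antitoneOn _).integrableOn_isCompact isCompact_Icc).mono_set Ioc_subset_Icc_self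
  rw [layer_cake ν, layer_cake μ, ← integral_sub (tail_int ν) (tail_int μ), ← Real.norm_eq_abs]
  calc _ ≤ tvDist ν μ * volume.real (Ioc 0 M) :=
        norm_setIntegral_le_of_norm_le_const measure_Ioc_lt_top fun t _ =>
          abs_measureReal_sub_le_tvDist ν μ (measurableSet_le measurable_const hm)
    _ = M * tvDist ν μ := by rw [Real.volume_real_Ioc_of_le hM, sub_zero, mul_comm]

lemma abs_integral_sub_integral_le_two_mul_tvDist (ν μ : Measure α) [IsProbabilityMeasure ν]
    [IsProbabilityMeasure μ] {g : α → ℝ} (hm : Measurable g) {C : ℝ} (hC : ∀ x, |g x| ≤ C) :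
    |∫ x, g x ∂ν - ∫ x, g x ∂μ| ≤ 2 * C * tvDist ν μ := by
  obtain ⟨x₀⟩ := nonempty_of_isProbabilityMeasure ν
  have g_int : ∀ (m : Measure α) [IsProbabilityMeasure m], Integrable g m := fun m _ =>
    (integrable_const C).mono' hm.aestronglyMeasurable (.of_forall hC)
  have shift : ∀ (m : Measure α) [IsProbabilityMeasure m],
      ∫ x, g x + C ∂m = ∫ x, g x ∂m + C := fun m _ => by
    simp [integral_add (g_int m) (integrable_const C)]
  have := abs_integral_sub_integral_le_mul_tvDist ν μ (hm.add_const C) (M := 2 * C)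
    (by linarith [abs_nonneg (g x₀), hC x₀]) (fun x => by linarith [neg_abs_le (g x), hC x])
    (fun x => by linarith [le_abs_self (g x), hC x])
  rwa [shift ν, shift μ, add_sub_add_right_eq_sub] at this

lemma tendsto_integral_sub_integral_of_tendsto_tvDist {ι : Type*} {l : Filter ι}
    {μ : ι → Measure α} [∀ i, IsProbabilityMeasure (μ i)] {ν : Measure α} [IsProbabilityMeasure ν]
    (hμ : Tendsto (fun i => tvDist (μ i) ν) l (𝓝 0)) {g : ι → α → ℝ}
    (hg : ∀ i, Measurable (g i)) {C : ℝ} (hC : ∀ i x, |g i x| ≤ C) :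
    Tendsto (fun i => ∫ x, g i x ∂μ i - ∫ x, g i x ∂ν) l (𝓝 0) :=
  squeeze_zero_norm
    (fun i => abs_integral_sub_integral_le_two_mul_tvDist (μ i) ν (hg i) (hC i))
    (by simpa using hμ.const_mul (2 * C))

end TotalVariation

section Graph

variable {α β ι : Type*} [MeasurableSpace α] {μ : Measure α} {l : Filter ι}

lemma MeasureTheory.TendstoInMeasure.prodMk_left [PseudoEMetricSpace α] [PseudoEMetricSpace β]
    {T : ι → α → β} {T₀ : α → β} (h : TendstoInMeasure μ T l T₀) :
    TendstoInMeasure μ (fun i x => (x, T i x)) l (fun x => (x, T₀ x)) := by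
  simpa only [TendstoInMeasure, Prod.edist_eq, edist_self, zero_max] using h

lemma tendsto_integral_comp_graph_of_tendstoInMeasure [PseudoEMetricSpace α] [BorelSpace α]
    [PseudoEMetricSpace β] [MeasurableSpace β] [BorelSpace β] [SecondCountableTopologyEither α β]
    [IsProbabilityMeasure μ] [l.IsCountablyGenerated] [l.NeBot]
    {T : ι → α → β} {T₀ : α → β} (h : TendstoInMeasure μ T l T₀) (hT : ∀ i, Measurable (T i))
    (f : BoundedContinuousFunction (α × β) ℝ) :
    Tendsto (fun i => ∫ x, f (x, T i x) ∂μ) l (𝓝 (∫ x, f (x, T₀ x) ∂μ)) := by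
  have h_dist := h.prodMk_left.tendstoInDistribution
    fun i => (measurable_id.prodMk (hT i)).aemeasurable
  convert ProbabilityMeasure.tendsto_iff_forall_integral_tendsto.mp h_dist.tendsto f using 2
  · exact (integral_map (h_dist.forall_aemeasurable _) f.continuous.aestronglyMeasurable).symm
  · exact (integral_map h_dist.aemeasurable_limit f.continuous.aestronglyMeasurable).symm

end Graph

theorem stmt17 {X : Type*}
    [MetricSpace X] [PolishSpace X] [MeasurableSpace X] [BorelSpace X]
    (μ : ℕ → Measure X) [∀ n, IsProbabilityMeasure (μ n)]
    -- total variation convergence μₙ → μ₀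
    (hTV : Tendsto (fun n => ⨆ s : {s : Set X // MeasurableSet s},
        |((μ n) s.1).toReal - ((μ 0) s.1).toReal|) atTop (𝓝 0))
    (T : ℕ → X → X) (hT : ∀ n, Measurable (T n))
    -- convergence of Tₙ to T₀ in measure μ₀
    (hmeas : ∀ δ : ℝ, 0 < δ →
      Tendsto (fun n => (μ 0) {x | δ ≤ dist (T n x) (T 0 x)}) atTop (𝓝 0)) :
    -- weak convergence of the plans σₙ = (id, Tₙ)_*μₙ to σ₀ = (id, T₀)_*μ₀
    ∀ f : BoundedContinuousFunction (X × X) ℝ,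
      Tendsto (fun n => ∫ p, f p ∂((μ n).map (fun x => (x, T n x))))
        atTop (𝓝 (∫ p, f p ∂((μ 0).map (fun x => (x, T 0 x))))) := by
  intro f
  have graph_integral : ∀ n, ∫ p, f p ∂((μ n).map fun x => (x, T n x)) = ∫ x, f (x, T n x) ∂μ n :=
    fun n => integral_map (measurable_id.prodMk (hT n)).aemeasurable
      f.continuous.aestronglyMeasurable
  simp only [graph_integral]
  have change_of_measure : Tendsto (fun n => ∫ x, f (x, T n x) ∂μ n - ∫ x, f (x, T n x) ∂μ 0)
      atTop (𝓝 0) :=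
    tendsto_integral_sub_integral_of_tendsto_tvDist hTV
      (fun n => f.continuous.measurable.comp (measurable_id.prodMk (hT n)))
      (fun n x => f.norm_coe_le_norm (x, T n x))
  have change_of_map := tendsto_integral_comp_graph_of_tendstoInMeasure
    (tendstoInMeasure_iff_dist.mpr hmeas) hT f
  simpa using change_of_measure.add change_of_map
end

section
/- Non-uniqueness limit example: Let μ = ν be Lebesgue measure on [0,1], and define cost functions h_t on [0,1]² by h_t(x,y) = min(|x−y|, |x+y−1| + t) for t ≥ 0 and h_t(x,y) = min(|x−y| − t, |x+y−1|) for t < 0. Then for every t > 0 the unique optimal plan for (μ,ν,h_t) is the pushforward of Lebesgue measure under x ↦ (x,x) (concentrated on the diagonal y = x), and for every t < 0 the unique optimal plan is the pushforward under x ↦ (x, 1−x) (concentrated on the antidiagonal x + y = 1). -/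
open MeasureTheory
open scoped ENNReal

def IsOptimalPlan {X Y : Type*} [MeasurableSpace X] [MeasurableSpace Y]
    (σ : Measure (X × Y)) (μ : Measure X) (ν : Measure Y) (h : X × Y → ℝ) : Prop :=
  IsCoupling σ μ ν ∧ (∫⁻ p, ENNReal.ofReal (h p) ∂σ) = Kcost (fun x y => h (x, y)) μ ν

/-- The parametric family of cost functions on `[0,1]²`. -/
noncomputable def hParam (t : ℝ) (p : ℝ × ℝ) : ℝ :=
  if 0 ≤ t then min |p.1 - p.2| (|p.1 + p.2 - 1| + t)
  else min (|p.1 - p.2| - t) |p.1 + p.2 - 1|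

/-!
For `t > 0` the cost `hParam t` vanishes exactly on the diagonal, and for `t < 0` exactly on the
antidiagonal; both are graphs of maps preserving Lebesgue measure on `[0,1]`. The plan carried by
such a graph has cost `0`, hence is optimal, and every optimal plan then has cost `0`, so it is
concentrated on the graph; a plan concentrated on the graph of `g` is determined by its first
marginal.
-/

section GraphPlan

variable {X Y : Type*} [MeasurableSpace X] [MeasurableSpace Y] {μ : Measure X} {ν : Measure Y}
  {g : X → Y}

theorem isCoupling_map_graph (hg : Measurable g) (hμν : μ.map g = ν) :
    IsCoupling (μ.map fun x => (x, g x)) μ ν := by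
  have hgraph : Measurable fun x => (x, g x) := measurable_id.prodMk hg
  constructor
  · rw [Measure.map_map measurable_fst hgraph]
    exact Measure.map_id
  · rw [Measure.map_map measurable_snd hgraph]
    exact hμν

theorem eq_map_graph_of_ae_snd_eq {σ : Measure (X × Y)} (hg : Measurable g)
    (hfst : σ.map Prod.fst = μ) (hσ : ∀ᵐ p ∂σ, p.2 = g p.1) :
    σ = μ.map fun x => (x, g x) := by
  have hgraph : Measurable fun x => (x, g x) := measurable_id.prodMk hg
  have hproj : (fun p : X × Y => (p.1, g p.1)) =ᵐ[σ] id := by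
    filter_upwards [hσ] with p hp
    rw [← hp]
    rfl
  calc σ = σ.map id := Measure.map_id.symm
    _ = σ.map fun p => (p.1, g p.1) := (Measure.map_congr hproj).symm
    _ = (σ.map Prod.fst).map fun x => (x, g x) := (Measure.map_map hgraph measurable_fst).symm
    _ = μ.map fun x => (x, g x) := by rw [hfst]

theorem isOptimalPlan_map_graph_unique {h : X × Y → ℝ} (hh : Measurable h) (hg : Measurable g)
    (hμν : μ.map g = ν) (hcost : ∀ p, h p ≤ 0 ↔ p.2 = g p.1) :
    IsOptimalPlan (μ.map fun x => (x, g x)) μ ν h ∧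
      ∀ σ, IsOptimalPlan σ μ ν h → σ = μ.map fun x => (x, g x) := by
  have hcoup := isCoupling_map_graph hg hμν
  have hcost_meas : Measurable fun p => ENNReal.ofReal (h p) := ENNReal.measurable_ofReal.comp hh
  have hgraph_cost : ∫⁻ p, ENNReal.ofReal (h p) ∂(μ.map fun x => (x, g x)) = 0 := by
    rw [lintegral_map hcost_meas (by fun_prop)]
    simp [ENNReal.ofReal_eq_zero.2 ((hcost (_, g _)).2 rfl)]
  have hK : Kcost (fun x y => h (x, y)) μ ν = 0 :=
    le_antisymm ((iInf₂_le (μ.map fun x => (x, g x)) hcoup).trans hgraph_cost.le) bot_le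
  refine ⟨⟨hcoup, by rw [hgraph_cost, hK]⟩, fun σ ⟨hσ, hσ_cost⟩ => ?_⟩
  rw [hK, lintegral_eq_zero_iff hcost_meas] at hσ_cost
  refine eq_map_graph_of_ae_snd_eq hg hσ.1 ?_
  filter_upwards [hσ_cost] with p hp
  exact (hcost p).1 (ENNReal.ofReal_eq_zero.1 hp)

end GraphPlan

theorem measurable_hParam (t : ℝ) : Measurable (hParam t) := by
  unfold hParam
  split_ifs <;> fun_prop

theorem hParam_nonpos_iff_of_pos {t : ℝ} (ht : 0 < t) (p : ℝ × ℝ) :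
    hParam t p ≤ 0 ↔ p.2 = p.1 := by
  have : 0 < |p.1 + p.2 - 1| + t := by positivity
  simp only [hParam, if_pos ht.le, min_le_iff, abs_nonpos_iff, sub_eq_zero, eq_comm (a := p.2)]
  exact ⟨fun h => h.resolve_right fun h' => by linarith, Or.inl⟩

theorem hParam_nonpos_iff_of_neg {t : ℝ} (ht : t < 0) (p : ℝ × ℝ) :
    hParam t p ≤ 0 ↔ p.2 = 1 - p.1 := by
  have : 0 < |p.1 - p.2| - t := by linarith [abs_nonneg (p.1 - p.2)]
  simp only [hParam, if_neg ht.not_ge, min_le_iff, abs_nonpos_iff]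
  exact ⟨fun h => by rcases h with h | h <;> linarith, fun h => Or.inr (by linarith)⟩

theorem map_one_sub_volume_Icc :
    (volume.restrict (Set.Icc (0 : ℝ) 1)).map (fun x => 1 - x) = volume.restrict (Set.Icc 0 1) := by
  have := ((Measure.measurePreserving_sub_left volume (1 : ℝ)).restrict_preimage
    (measurableSet_Icc (a := 0) (b := 1))).map_eq
  rwa [Set.preimage_const_sub_Icc, sub_self, sub_zero] at this

theorem stmt18 :
    let μ : Measure ℝ := volume.restrict (Set.Icc 0 1)
    (∀ t : ℝ, 0 < t →
      IsOptimalPlan (μ.map fun x => (x, x)) μ μ (hParam t) ∧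
      ∀ σ : Measure (ℝ × ℝ), IsOptimalPlan σ μ μ (hParam t) →
        σ = μ.map fun x => (x, x)) ∧
    (∀ t : ℝ, t < 0 →
      IsOptimalPlan (μ.map fun x => (x, 1 - x)) μ μ (hParam t) ∧
      ∀ σ : Measure (ℝ × ℝ), IsOptimalPlan σ μ μ (hParam t) →
        σ = μ.map fun x => (x, 1 - x)) :=
  ⟨fun t ht => isOptimalPlan_map_graph_unique (g := id) (measurable_hParam t) measurable_id
      Measure.map_id (hParam_nonpos_iff_of_pos ht),
    fun t ht => isOptimalPlan_map_graph_unique (measurable_hParam t) (by fun_prop)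
      map_one_sub_volume_Icc (hParam_nonpos_iff_of_neg ht)⟩
end
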